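/- arXiv:1403.1013 — 2 statements merged into one kernel-verified Lean document; each statement's English description precedes it below -/
import Mathlib

section
/- Let (Sₙ)ₙ be a sequence of real random variables converging in distribution to a standard normal random variable, and let ε > 0. Set δ = ε√(2π)/9. Then there exists n₀ such that for all n ≥ n₀ and every τ ∈ ℝ, P(Sₙ ≥ τ + δ) + P(Sₙ ≤ τ − δ) ≥ 1 − 2ε/3. -/
/-!
By Pólya's theorem, pointwise convergence of distribution functions to a uniformly continuous
limit is uniform: convergence is uniform on a finite grid, monotonicity transfers it to the points
in between up to the oscillation of the limit, and the bounds `0 ≤ F ≤ 1` handle the tails.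
Once `|Fₙ - Φ| < ε/9` everywhere, the sum of the two probabilities is at least
`1 - (Fₙ(τ + δ) - Fₙ(τ - δ)) ≥ 1 - (Φ(τ + δ) - Φ(τ - δ)) - 2ε/9`, and since the Gaussian density
is at most `1/√(2π)`, the increment of `Φ` is at most `2δ/√(2π) = 2ε/9`.
-/

open MeasureTheory ProbabilityTheory Filter Topology Real

section Polya

variable {ι : Type*} {l : Filter ι} {F : ι → ℝ → ℝ} {G : ℝ → ℝ}

lemma eventually_forall_lt_add_of_forall_tendsto (hF : ∀ i, Monotone (F i))
    (hF1 : ∀ i x, F i x ≤ 1) (hG : UniformContinuous G) (hG0 : Tendsto G atBot (𝓝 0))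
    (hG1 : Tendsto G atTop (𝓝 1)) (h : ∀ x, Tendsto (fun i ↦ F i x) l (𝓝 (G x)))
    {η : ℝ} (hη : 0 < η) :
    ∀ᶠ i in l, ∀ x, F i x < G x + η := by
  have hη3 : 0 < η / 3 := by positivity
  obtain ⟨a, ha⟩ := eventually_atBot.mp (Metric.tendsto_nhds.mp hG0 _ hη3)
  obtain ⟨b, hb⟩ := eventually_atTop.mp (Metric.tendsto_nhds.mp hG1 _ hη3)
  obtain ⟨r, hr, hGr⟩ := Metric.uniformContinuous_iff.mp hG _ hη3
  obtain ⟨s, -, hs, hcover⟩ :=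
    (isCompact_Icc (a := a) (b := b)).finite_cover_balls (half_pos hr)
  -- Right endpoints of the covering balls: each `x ∈ [a, b]` lies below one within distance `r`.
  set T := insert a ((· + r / 2) '' s)
  have hT : ∀ᶠ i in l, ∀ t ∈ T, F i t < G t + η / 3 :=
    (eventually_all_finite ((hs.image _).insert a)).mpr fun t _ ↦
      (h t).eventually (eventually_lt_nhds (lt_add_of_pos_right _ hη3))
  filter_upwards [hT] with i hi x
  rcases le_or_gt x a with hxa | hax
  · have hGa := ha a le_rfl
    have hGx := ha x hxa
    rw [Real.dist_0_eq_abs, abs_lt] at hGa hGx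
    linarith [hF i hxa, hi a (Set.mem_insert a _)]
  rcases le_or_gt b x with hbx | hxb
  · have hGx := hb x hbx
    rw [Real.dist_eq, abs_lt] at hGx
    linarith [hF1 i x]
  obtain ⟨t, hts, hxt⟩ := Set.mem_iUnion₂.mp (hcover ⟨hax.le, hxb.le⟩)
  rw [Metric.mem_ball, Real.dist_eq, abs_lt] at hxt
  have hz : F i (t + r / 2) < G (t + r / 2) + η / 3 :=
    hi _ (Set.mem_insert_of_mem _ (Set.mem_image_of_mem _ hts))
  have hGz := hGr (show dist (t + r / 2) x < r by
    rw [Real.dist_eq, abs_lt]; constructor <;> linarith)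
  rw [Real.dist_eq, abs_lt] at hGz
  linarith [hF i (show x ≤ t + r / 2 by linarith)]

theorem tendstoUniformly_of_forall_tendsto_of_monotone (hF : ∀ i, Monotone (F i))
    (hF0 : ∀ i x, 0 ≤ F i x) (hF1 : ∀ i x, F i x ≤ 1) (hG : UniformContinuous G)
    (hG0 : Tendsto G atBot (𝓝 0)) (hG1 : Tendsto G atTop (𝓝 1))
    (h : ∀ x, Tendsto (fun i ↦ F i x) l (𝓝 (G x))) :
    TendstoUniformly F G l := by
  refine Metric.tendstoUniformly_iff.mpr fun η hη ↦ ?_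
  have hupper := eventually_forall_lt_add_of_forall_tendsto hF hF1 hG hG0 hG1 h hη
  -- The lower bound is the upper bound for the reflected functions `x ↦ 1 - F i (-x)`.
  have hlower := eventually_forall_lt_add_of_forall_tendsto (G := fun x ↦ 1 - G (-x))
    (F := fun i x ↦ 1 - F i (-x)) (fun i x y hxy ↦ sub_le_sub_left (hF i (neg_le_neg hxy)) 1)
    (fun i x ↦ sub_le_self 1 (hF0 i (-x)))
    (uniformContinuous_const.sub (hG.comp _root_.uniformContinuous_neg))
    (by simpa using (tendsto_const_nhds (x := (1 : ℝ))).sub (hG1.comp tendsto_neg_atBot_atTop))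
    (by simpa using (tendsto_const_nhds (x := (1 : ℝ))).sub (hG0.comp tendsto_neg_atTop_atBot))
    (fun x ↦ tendsto_const_nhds.sub (h (-x))) hη
  filter_upwards [hupper, hlower] with i hupper hlower x
  have := hlower (-x)
  rw [neg_neg] at this
  rw [Real.dist_eq, abs_sub_lt_iff]
  constructor <;> linarith [hupper x]

end Polya

lemma gaussianPDFReal_le_inv_sqrt (μ : ℝ) (v : NNReal) (x : ℝ) :
    gaussianPDFReal μ v x ≤ (√(2 * π * v))⁻¹ :=
  mul_le_of_le_one_right (by positivity) <| exp_le_one_iff.mpr <|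
    div_nonpos_of_nonpos_of_nonneg (neg_nonpos.mpr (sq_nonneg _)) (by positivity)

lemma gaussianReal_le_smul_volume (μ : ℝ) {v : NNReal} (hv : v ≠ 0) :
    gaussianReal μ v ≤ ENNReal.ofReal (√(2 * π * v))⁻¹ • volume := by
  rw [gaussianReal_of_var_ne_zero μ hv, ← withDensity_const]
  exact withDensity_mono <| ae_of_all _ fun x ↦
    ENNReal.ofReal_le_ofReal (gaussianPDFReal_le_inv_sqrt μ v x)

lemma cdf_gaussianReal_sub_le (μ : ℝ) {v : NNReal} (hv : v ≠ 0) {a b : ℝ} (hab : a ≤ b) :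
    cdf (gaussianReal μ v) b - cdf (gaussianReal μ v) a ≤ (b - a) / √(2 * π * v) := by
  have h := gaussianReal_le_smul_volume μ hv (Set.Ioc a b)
  rw [← measure_cdf (gaussianReal μ v), StieltjesFunction.measure_Ioc, Measure.smul_apply,
    Real.volume_Ioc, smul_eq_mul, ← ENNReal.ofReal_mul (by positivity),
    ENNReal.ofReal_le_ofReal_iff (by positivity)] at h
  rwa [div_eq_inv_mul]

lemma lipschitzWith_cdf_gaussianReal (μ : ℝ) {v : NNReal} (hv : v ≠ 0) :
    LipschitzWith (√(2 * π * v))⁻¹.toNNReal (cdf (gaussianReal μ v)) := by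
  refine LipschitzWith.of_le_add_mul' _ fun x y ↦ ?_
  rcases le_total x y with hxy | hyx
  · have := monotone_cdf (gaussianReal μ v) hxy
    have : 0 ≤ (√(2 * π * v))⁻¹ * dist x y := by positivity
    linarith
  · have := cdf_gaussianReal_sub_le μ hv hyx
    rw [Real.dist_eq, abs_of_nonneg (sub_nonneg.mpr hyx)]
    rw [div_eq_inv_mul] at this
    linarith

lemma one_le_measureReal_le_add_measureReal_ge {Ω : Type*} [MeasurableSpace Ω] (μ : Measure Ω)
    [IsProbabilityMeasure μ] (f : Ω → ℝ) (a : ℝ) :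
    1 ≤ μ.real {ω | a ≤ f ω} + μ.real {ω | f ω ≤ a} :=
  calc 1 = μ.real Set.univ := probReal_univ.symm
    _ ≤ μ.real ({ω | a ≤ f ω} ∪ {ω | f ω ≤ a}) :=
      measureReal_mono fun ω _ ↦ le_total a (f ω)
    _ ≤ _ := measureReal_union_le _ _

/-- Appendix A of the paper (equation (9)): if the distribution functions of `Sₙ` converge
pointwise to the standard normal distribution function `Φ`, and `ε > 0`, then with
`δ = ε √(2π) / 9` there exists `n₀` such that for all `n ≥ n₀` and every threshold `τ`,
`P(Sₙ ≥ τ + δ) + P(Sₙ ≤ τ - δ) ≥ 1 - 2ε/3`. -/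
theorem stmt_1
    (Ω : ℕ → Type) [∀ n, MeasurableSpace (Ω n)]
    (P : ∀ n, Measure (Ω n)) [∀ n, IsProbabilityMeasure (P n)]
    (S : ∀ n, Ω n → ℝ)
    (hS : ∀ x : ℝ, Tendsto (fun n => (P n {ω | S n ω ≤ x}).toReal) atTop
      (nhds ((gaussianReal 0 1 (Set.Iic x)).toReal)))
    (ε : ℝ) (hε : 0 < ε) :
    ∃ n₀ : ℕ, ∀ n ≥ n₀, ∀ τ : ℝ,
      (P n {ω | S n ω ≥ τ + ε * Real.sqrt (2 * Real.pi) / 9}).toReal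
        + (P n {ω | S n ω ≤ τ - ε * Real.sqrt (2 * Real.pi) / 9}).toReal
        ≥ 1 - 2 * ε / 3 := by
  set Φ := cdf (gaussianReal 0 1)
  have hunif : TendstoUniformly (fun n x ↦ (P n).real {ω | S n ω ≤ x}) Φ atTop :=
    tendstoUniformly_of_forall_tendsto_of_monotone
      (fun n x y hxy ↦ measureReal_mono fun ω (hω : S n ω ≤ x) ↦ hω.trans hxy)
      (fun _ _ ↦ measureReal_nonneg) (fun _ _ ↦ measureReal_le_one)
      (lipschitzWith_cdf_gaussianReal 0 one_ne_zero).uniformContinuous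
      (tendsto_cdf_atBot _) (tendsto_cdf_atTop _) fun x ↦ by rw [cdf_eq_real]; exact hS x
  obtain ⟨n₀, hn₀⟩ :=
    eventually_atTop.mp (Metric.tendstoUniformly_iff.mp hunif (ε / 9) (by positivity))
  refine ⟨n₀, fun n hn τ ↦ ?_⟩
  set δ := ε * √(2 * π) / 9
  have hupper := hn₀ n hn (τ + δ)
  have hlower := hn₀ n hn (τ - δ)
  rw [Real.dist_eq, abs_lt] at hupper hlower
  have hΦ : Φ (τ + δ) - Φ (τ - δ) ≤ 2 * ε / 9 :=
    (cdf_gaussianReal_sub_le 0 one_ne_zero (by linarith [show 0 ≤ δ by positivity])).trans_eq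
      (by simp only [NNReal.coe_one, mul_one, δ]; field_simp; ring)
  have := one_le_measureReal_le_add_measureReal_ge (P n) (S n) (τ + δ)
  show (P n).real _ + (P n).real _ ≥ _
  linarith
end

section
/- Let n ≥ 1, a ∈ ℝ, σ > 0, and fix c ∈ {−1,1}ⁿ. Let z₁,…,zₙ be i.i.d. Gaussian random variables with mean 0 and variance σ², let yᵢ = a·cᵢ + zᵢ, and define U = exp(−na²/(2σ²)) · (1/2ⁿ) · Σ_{b ∈ {−1,1}ⁿ} exp((a/σ²)·Σ_{i=1}^{n} yᵢbᵢ). Then E[U²] ≤ (cosh(a²/σ²))ⁿ · (cosh(2a²/σ²))ⁿ. -/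
open MeasureTheory ProbabilityTheory Finset

/-!
Squaring `U` turns it into a double average over `b, d ∈ {±1}ⁿ` of exponentials of linear forms
in the independent Gaussians `yᵢ = a cᵢ + zᵢ`, whose expectations are Gaussian moment generating
functions. Since `(bᵢ + dᵢ)² = 2 + 2 bᵢ dᵢ`, the normalising factor `exp (-n a²/σ²)` cancels and
`E[U²] = 2^(-2n) Σ_{b,d} exp ((a²/σ²) Σᵢ (cᵢ bᵢ + (cᵢ + bᵢ) dᵢ))`. Summing over `d` gives
`Πᵢ 2 cosh ((a²/σ²)(cᵢ + bᵢ)) ≤ (2 cosh (2a²/σ²))ⁿ`, and the remaining sum over `b` is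
`Πᵢ 2 cosh ((a²/σ²) cᵢ) = (2 cosh (a²/σ²))ⁿ`.
-/

open Real
open scoped NNReal

local notation "±1^" ι => Fintype.piFinset fun _ : ι => ({-1, 1} : Finset ℝ)

namespace ProbabilityTheory

variable {Ω ι : Type*} [MeasurableSpace Ω] {μ : Measure Ω} [Fintype ι]
  {z : ι → Ω → ℝ} {m : ι → ℝ} {v : ι → ℝ≥0}

theorem iIndepFun.mgf_sum_mul_of_hasLaw_gaussianReal
    (hz : ∀ i, HasLaw (z i) (gaussianReal (m i) (v i)) μ) (hindep : iIndepFun z μ) (s : ι → ℝ) :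
    mgf (fun ω ↦ ∑ i, s i * z i ω) μ 1 = exp (∑ i, (m i * s i + v i * s i ^ 2 / 2)) := by
  have hsz : iIndepFun (fun i ω ↦ s i * z i ω) μ :=
    hindep.comp (fun i x ↦ s i * x) fun i ↦ measurable_const_mul (s i)
  calc mgf (fun ω ↦ ∑ i, s i * z i ω) μ 1 = mgf (∑ i, fun ω ↦ s i * z i ω) μ 1 := by
        simp only [Finset.sum_fn]
    _ = ∏ i, mgf (fun ω ↦ s i * z i ω) μ 1 :=
        hsz.mgf_sum₀ (fun i ↦ (hz i).aemeasurable.const_mul (s i)) _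
    _ = exp (∑ i, (m i * s i + v i * s i ^ 2 / 2)) := by
        simp_rw [mgf_const_mul, mul_one, mgf_gaussianReal (hz _).map_eq, exp_sum]

theorem iIndepFun.integral_exp_sum_mul_of_hasLaw_gaussianReal
    (hz : ∀ i, HasLaw (z i) (gaussianReal (m i) (v i)) μ) (hindep : iIndepFun z μ) (s : ι → ℝ) :
    ∫ ω, exp (∑ i, s i * z i ω) ∂μ = exp (∑ i, (m i * s i + v i * s i ^ 2 / 2)) := by
  simpa [mgf] using hindep.mgf_sum_mul_of_hasLaw_gaussianReal hz s

theorem iIndepFun.integrable_exp_sum_mul_of_hasLaw_gaussianReal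
    (hz : ∀ i, HasLaw (z i) (gaussianReal (m i) (v i)) μ) (hindep : iIndepFun z μ) (s : ι → ℝ) :
    Integrable (fun ω ↦ exp (∑ i, s i * z i ω)) μ := by
  have := hindep.isProbabilityMeasure
  have hpos := mgf_pos_iff.mp
    ((hindep.mgf_sum_mul_of_hasLaw_gaussianReal hz s).symm ▸ exp_pos _)
  simpa only [one_mul] using hpos

end ProbabilityTheory

section Signs

variable {ι : Type*} [Fintype ι] [DecidableEq ι]

lemma abs_eq_one_of_mem_piFinset_signs {b : ι → ℝ} (hb : b ∈ ±1^ι) (i : ι) : |b i| = 1 := by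
  have hbi := Fintype.mem_piFinset.mp hb i
  simp only [mem_insert, mem_singleton] at hbi
  rcases hbi with h | h <;> simp [h]

lemma sum_signs_exp_sum_mul (w : ι → ℝ) :
    ∑ d ∈ ±1^ι, exp (∑ i, w i * d i) = ∏ i, 2 * cosh (w i) := by
  simp_rw [exp_sum]
  rw [← prod_univ_sum (fun _ ↦ ({-1, 1} : Finset ℝ)) fun i x ↦ exp (w i * x)]
  refine prod_congr rfl fun i _ ↦ ?_
  rw [sum_pair (by norm_num), cosh_eq]
  ring_nf

lemma sum_signs_sum_signs_exp_le (α : ℝ) {c : ι → ℝ} (hc : ∀ i, |c i| ≤ 1) :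
    ∑ b ∈ ±1^ι, ∑ d ∈ ±1^ι, exp (α * ∑ i, (c i * b i + (c i + b i) * d i))
      ≤ (2 * cosh α) ^ Fintype.card ι * (2 * cosh (2 * α)) ^ Fintype.card ι := by
  have hinner : ∀ b ∈ ±1^ι, ∑ d ∈ ±1^ι, exp (α * ∑ i, (c i * b i + (c i + b i) * d i))
      = exp (∑ i, α * c i * b i) * ∏ i, 2 * cosh (α * (c i + b i)) := by
    intro b _
    have hsplit : ∀ d : ι → ℝ, α * ∑ i, (c i * b i + (c i + b i) * d i)
        = ∑ i, α * c i * b i + ∑ i, α * (c i + b i) * d i := fun d ↦ by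
      rw [mul_sum, ← sum_add_distrib]
      exact sum_congr rfl fun i _ ↦ by ring
    simp_rw [hsplit, exp_add, ← mul_sum, sum_signs_exp_sum_mul]
  have hcosh : ∀ b ∈ ±1^ι, ∀ i, cosh (α * (c i + b i)) ≤ cosh (2 * α) := by
    intro b hb i
    rw [cosh_le_cosh, abs_mul, abs_mul, mul_comm |2|]
    refine mul_le_mul_of_nonneg_left ?_ (abs_nonneg α)
    calc |c i + b i| ≤ |c i| + |b i| := abs_add_le _ _
      _ ≤ 1 + 1 := add_le_add (hc i) (abs_eq_one_of_mem_piFinset_signs hb i).le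
      _ = |2| := by norm_num
  calc ∑ b ∈ ±1^ι, ∑ d ∈ ±1^ι, exp (α * ∑ i, (c i * b i + (c i + b i) * d i))
      = ∑ b ∈ ±1^ι, exp (∑ i, α * c i * b i) * ∏ i, 2 * cosh (α * (c i + b i)) :=
        sum_congr rfl hinner
    _ ≤ ∑ b ∈ ±1^ι, exp (∑ i, α * c i * b i) * ∏ _i : ι, 2 * cosh (2 * α) := by
        gcongr with b hb i
        exact hcosh b hb i
    _ = (∏ i, 2 * cosh (α * c i)) * (2 * cosh (2 * α)) ^ Fintype.card ι := by
        rw [← sum_mul, sum_signs_exp_sum_mul, prod_const, card_univ]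
    _ ≤ (∏ _i : ι, 2 * cosh α) * (2 * cosh (2 * α)) ^ Fintype.card ι := by
        gcongr with i
        rw [cosh_le_cosh, abs_mul]
        exact mul_le_of_le_one_right (abs_nonneg α) (hc i)
    _ = (2 * cosh α) ^ Fintype.card ι * (2 * cosh (2 * α)) ^ Fintype.card ι := by
        rw [prod_const, card_univ]

end Signs

/-- Willie's statistic `U`, evaluated at the received word `y`. -/
noncomputable def likelihoodRatio (n : ℕ) (a σ : ℝ) (y : Fin n → ℝ) : ℝ :=
  exp (-(n * a ^ 2) / (2 * σ ^ 2)) *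
    ((1 / 2 ^ n) * ∑ b ∈ ±1^(Fin n), exp ((a / σ ^ 2) * ∑ i, y i * b i))

lemma likelihoodRatio_sq (n : ℕ) (a σ : ℝ) (y : Fin n → ℝ) :
    likelihoodRatio n a σ y ^ 2 = exp (-(n * a ^ 2) / σ ^ 2) / 2 ^ (2 * n) *
      ∑ b ∈ ±1^(Fin n), ∑ d ∈ ±1^(Fin n), exp (∑ i, a / σ ^ 2 * (b i + d i) * y i) := by
  have hprod : ∀ b d : Fin n → ℝ, exp ((a / σ ^ 2) * ∑ i, y i * b i)
      * exp ((a / σ ^ 2) * ∑ i, y i * d i) = exp (∑ i, a / σ ^ 2 * (b i + d i) * y i) := by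
    intro b d
    rw [← exp_add, ← mul_add, ← sum_add_distrib, mul_sum]
    exact congrArg exp (sum_congr rfl fun i _ ↦ by ring)
  have hscale : exp (-(n * a ^ 2) / (2 * σ ^ 2)) ^ 2 * (1 / 2 ^ n) ^ 2
      = exp (-(n * a ^ 2) / σ ^ 2) / 2 ^ (2 * n) := by
    rw [sq (exp _), ← exp_add]
    ring_nf
  rw [likelihoodRatio, mul_pow, mul_pow, sq (∑ _ ∈ _, _), sum_mul_sum, ← mul_assoc, hscale]
  simp_rw [hprod]

theorem integral_likelihoodRatio_sq {Ω : Type*} [MeasurableSpace Ω] {μ : Measure Ω}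
    {n : ℕ} {a σ : ℝ} (hσ : σ ≠ 0) (c : Fin n → ℝ) {y : Fin n → Ω → ℝ}
    (hy : ∀ i, HasLaw (y i) (gaussianReal (a * c i) ⟨σ ^ 2, sq_nonneg σ⟩) μ)
    (hindep : iIndepFun y μ) :
    ∫ ω, likelihoodRatio n a σ (fun i ↦ y i ω) ^ 2 ∂μ
      = (∑ b ∈ ±1^(Fin n), ∑ d ∈ ±1^(Fin n),
          exp (a ^ 2 / σ ^ 2 * ∑ i, (c i * b i + (c i + b i) * d i))) / 2 ^ (2 * n) := by
  have hint : ∀ s : Fin n → ℝ, Integrable (fun ω ↦ exp (∑ i, s i * y i ω)) μ :=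
    hindep.integrable_exp_sum_mul_of_hasLaw_gaussianReal hy
  simp_rw [likelihoodRatio_sq, sum_div]
  rw [integral_const_mul, integral_finsetSum _ fun b _ ↦ integrable_finsetSum _ fun d _ ↦
    hint _, mul_sum]
  refine sum_congr rfl fun b hb ↦ ?_
  rw [integral_finsetSum _ fun d _ ↦ hint _, mul_sum]
  refine sum_congr rfl fun d hd ↦ ?_
  rw [hindep.integral_exp_sum_mul_of_hasLaw_gaussianReal hy, div_mul_eq_mul_div, ← exp_add]
  congr 2
  have hσt : σ ^ 2 * (a / σ ^ 2) ^ 2 = a ^ 2 / σ ^ 2 := by field_simp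
  have hcoord : ∀ i, a * c i * (a / σ ^ 2 * (b i + d i))
      + σ ^ 2 * (a / σ ^ 2 * (b i + d i)) ^ 2 / 2
      = a ^ 2 / σ ^ 2 * (c i * b i + (c i + b i) * d i) + a ^ 2 / σ ^ 2 := by
    intro i
    have hb2 : b i ^ 2 = 1 := by rw [← sq_abs, abs_eq_one_of_mem_piFinset_signs hb, one_pow]
    have hd2 : d i ^ 2 = 1 := by rw [← sq_abs, abs_eq_one_of_mem_piFinset_signs hd, one_pow]
    linear_combination (a ^ 2 / σ ^ 2 / 2) * (hb2 + hd2) + ((b i + d i) ^ 2 / 2) * hσt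
  -- `↑⟨σ ^ 2, _⟩` is `σ ^ 2` only up to defeq, hence `congrArg` rather than `rw`.
  calc _ = -(n * a ^ 2) / σ ^ 2 + ∑ i, (a ^ 2 / σ ^ 2 * (c i * b i + (c i + b i) * d i)
        + a ^ 2 / σ ^ 2) := congrArg _ (sum_congr rfl fun i _ ↦ hcoord i)
    _ = _ := by
      rw [sum_add_distrib, ← mul_sum, sum_const, card_univ, Fintype.card_fin, nsmul_eq_mul]
      ring

theorem stmt_15_general
    {Ω : Type} [MeasurableSpace Ω] (μ : Measure Ω)
    (n : ℕ) (a σ : ℝ) (hσ : 0 < σ)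
    (c : Fin n → ℝ) (hc : ∀ i, c i = -1 ∨ c i = 1)
    (z : Fin n → Ω → ℝ) (hzm : ∀ i, Measurable (z i))
    (hz : ∀ i, μ.map (z i) = gaussianReal 0 ⟨σ ^ 2, sq_nonneg σ⟩)
    (hindep : iIndepFun z μ) :
    (∫ ω, (Real.exp (-(n * a ^ 2) / (2 * σ ^ 2)) * ((1 / 2 ^ n) *
        ∑ b ∈ Fintype.piFinset (fun _ : Fin n => ({-1, 1} : Finset ℝ)),
          Real.exp ((a / σ ^ 2) * ∑ i, (a * c i + z i ω) * b i))) ^ 2 ∂μ)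
      ≤ Real.cosh (a ^ 2 / σ ^ 2) ^ n * Real.cosh (2 * a ^ 2 / σ ^ 2) ^ n := by
  have hy (i : Fin n) :
      HasLaw (fun ω ↦ a * c i + z i ω) (gaussianReal (a * c i) ⟨σ ^ 2, sq_nonneg σ⟩) μ := by
    simpa using gaussianReal_const_add ⟨(hzm i).aemeasurable, hz i⟩ (a * c i)
  have hy_indep : iIndepFun (fun i ω ↦ a * c i + z i ω) μ :=
    hindep.comp (fun i x ↦ a * c i + x) fun i ↦ measurable_const_add _
  have hc_abs (i : Fin n) : |c i| ≤ 1 := by rcases hc i with h | h <;> simp [h]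
  change ∫ ω, likelihoodRatio n a σ (fun i ↦ a * c i + z i ω) ^ 2 ∂μ ≤ _
  rw [integral_likelihoodRatio_sq hσ.ne' c hy hy_indep]
  calc _ ≤ (2 * cosh (a ^ 2 / σ ^ 2)) ^ n * (2 * cosh (2 * (a ^ 2 / σ ^ 2))) ^ n
        / 2 ^ (2 * n) := by
        gcongr
        simpa using sum_signs_sum_signs_exp_le (a ^ 2 / σ ^ 2) hc_abs
    _ = _ := by
        field_simp
        ring

/-- For a fixed `c ∈ {-1,1}ⁿ`, `z₁,…,zₙ` i.i.d. Gaussian with mean `0` and variance `σ²`,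
`yᵢ = a cᵢ + zᵢ`, and
`U = exp (-n a²/(2σ²)) (1/2ⁿ) Σ_{b ∈ {-1,1}ⁿ} exp ((a/σ²) Σᵢ yᵢ bᵢ)`,
one has `E[U²] ≤ cosh (a²/σ²) ^ n * cosh (2a²/σ²) ^ n`. -/
theorem stmt_15
    {Ω : Type} [MeasurableSpace Ω] (μ : Measure Ω) [IsProbabilityMeasure μ]
    (n : ℕ) (hn : 1 ≤ n) (a σ : ℝ) (hσ : 0 < σ)
    (c : Fin n → ℝ) (hc : ∀ i, c i = -1 ∨ c i = 1)
    (z : Fin n → Ω → ℝ) (hzm : ∀ i, Measurable (z i))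
    (hz : ∀ i, μ.map (z i) = gaussianReal 0 ⟨σ ^ 2, sq_nonneg σ⟩)
    (hindep : iIndepFun z μ) :
    (∫ ω, (Real.exp (-(n * a ^ 2) / (2 * σ ^ 2)) * ((1 / 2 ^ n) *
        ∑ b ∈ Fintype.piFinset (fun _ : Fin n => ({-1, 1} : Finset ℝ)),
          Real.exp ((a / σ ^ 2) * ∑ i, (a * c i + z i ω) * b i))) ^ 2 ∂μ)
      ≤ Real.cosh (a ^ 2 / σ ^ 2) ^ n * Real.cosh (2 * a ^ 2 / σ ^ 2) ^ n :=
  stmt_15_general μ n a σ hσ c hc z hzm hz hindep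
end
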